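/- Let H be a nonzero complex Hilbert space and let B be an invertible bounded linear operator on H. Then the linear reduction factor satisfies M_B ≤ √(1 − ν_B²/‖B‖²) (Elman's bound). -/

import Mathlib

noncomputable def gmresRes {H : Type*} [NormedAddCommGroup H] [NormedSpace ℂ H]
    (T : H →L[ℂ] H) (r0 : H) (k : ℕ) : ℝ :=
  sInf {x : ℝ | ∃ p : Polynomial ℂ,
    p.natDegree ≤ k ∧ p.eval 0 = 1 ∧ x = ‖(Polynomial.aeval T p) r0‖}

/-- The linear reduction factor `M_B`: the infimum of the constants `M ≥ 0`
such that every GMRES residual sequence for `B` satisfies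
`‖r_k‖ ≤ M * ‖r_{k-1}‖`. -/
noncomputable def linRed {H : Type*} [NormedAddCommGroup H] [NormedSpace ℂ H]
    (B : H →L[ℂ] H) : ℝ :=
  sInf {M : ℝ | 0 ≤ M ∧ ∀ (z : H) (k : ℕ), gmresRes B z (k + 1) ≤ M * gmresRes B z k}

/-- The numerical range (field of values) of a bounded operator `T`:
`W(T) = { ⟨Tz, z⟩ : ‖z‖ = 1 }`, where the inner product `⟨·,·⟩` is linear in
its first argument (so `⟨Tz, z⟩` is `inner z (T z)` in Mathlib's convention). -/
def numRange {H : Type*} [NormedAddCommGroup H] [InnerProductSpace ℂ H]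
    (T : H →L[ℂ] H) : Set ℂ :=
  {c | ∃ z : H, ‖z‖ = 1 ∧ c = (inner ℂ z (T z) : ℂ)}

/-- `ν_T = inf { |λ| : λ ∈ W(T) }`. -/
noncomputable def nu {H : Type*} [NormedAddCommGroup H] [InnerProductSpace ℂ H]
    (T : H →L[ℂ] H) : ℝ :=
  sInf {x : ℝ | ∃ c ∈ numRange T, x = ‖c‖}

/-! Multiplying a degree-`k` residual polynomial by `1 - α X` gives an admissible
degree-`k + 1` one, so a GMRES step does at least as well as the minimal residual step
`r ↦ r - α B r`. Projecting `r` onto the line through `B r`, the best `α` leaves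
`‖r‖² - |⟨r, B r⟩|² / ‖B r‖²`, and `|⟨r, B r⟩| ≥ ν_B ‖r‖²`, `‖B r‖ ≤ ‖B‖ ‖r‖`
bound the removed part below by `ν_B² ‖r‖² / ‖B‖²`. -/

open Polynomial

section Projection

variable {𝕜 E : Type*} [RCLike 𝕜] [NormedAddCommGroup E] [InnerProductSpace 𝕜 E]

theorem norm_sub_inner_div_smul_sq (v r : E) :
    ‖r - (inner 𝕜 v r / (‖v‖ : 𝕜) ^ 2) • v‖ ^ 2 = ‖r‖ ^ 2 - ‖inner 𝕜 v r‖ ^ 2 / ‖v‖ ^ 2 := by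
  rcases eq_or_ne v 0 with rfl | hv
  · simp
  rw [@norm_sub_sq 𝕜, inner_smul_right, norm_smul, ← inner_conj_symm, norm_div, norm_pow,
    RCLike.norm_ofReal, abs_norm, RCLike.norm_conj, ← RCLike.ofReal_pow, div_mul_eq_mul_div,
    RCLike.conj_mul, ← RCLike.ofReal_pow, ← RCLike.ofReal_div, RCLike.ofReal_re]
  field_simp
  ring

end Projection

section NumericalRange

variable {H : Type*} [NormedAddCommGroup H] [InnerProductSpace ℂ H]

theorem nu_nonneg (T : H →L[ℂ] H) : 0 ≤ nu T :=
  Real.sInf_nonneg fun _ ⟨c, _, hx⟩ => hx ▸ norm_nonneg c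

theorem nu_le_norm_inner (T : H →L[ℂ] H) {z : H} (hz : ‖z‖ = 1) :
    nu T ≤ ‖inner ℂ z (T z)‖ :=
  csInf_le ⟨0, fun _ ⟨c, _, hx⟩ => hx ▸ norm_nonneg c⟩ ⟨_, ⟨z, hz, rfl⟩, rfl⟩

theorem nu_mul_norm_sq_le_norm_inner (T : H →L[ℂ] H) (r : H) :
    nu T * ‖r‖ ^ 2 ≤ ‖inner ℂ r (T r)‖ := by
  rcases eq_or_ne r 0 with rfl | hr
  · simp
  have h := nu_le_norm_inner T (norm_smul_inv_norm (𝕜 := ℂ) hr)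
  rw [map_smul, inner_smul_left, inner_smul_right, norm_mul, norm_mul, RCLike.norm_conj,
    norm_inv, RCLike.norm_ofReal, abs_norm] at h
  rw [← le_div_iff₀ (by positivity)]
  calc nu T ≤ _ := h
    _ = _ := by field_simp

theorem exists_norm_sub_smul_apply_le (T : H →L[ℂ] H) (r : H) :
    ∃ α : ℂ, ‖r - α • T r‖ ≤ √(1 - nu T ^ 2 / ‖T‖ ^ 2) * ‖r‖ := by
  obtain ⟨α, hα⟩ : ∃ α : ℂ, ‖r - α • T r‖ ^ 2 = ‖r‖ ^ 2 - ‖inner ℂ (T r) r‖ ^ 2 / ‖T r‖ ^ 2 :=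
    ⟨_, norm_sub_inner_div_smul_sq (T r) r⟩
  refine ⟨α, ?_⟩
  have hν := nu_mul_norm_sq_le_norm_inner T r
  have hν0 := nu_nonneg T
  have hgain : nu T ^ 2 * ‖r‖ ^ 2 / ‖T‖ ^ 2 ≤ ‖inner ℂ (T r) r‖ ^ 2 / ‖T r‖ ^ 2 := by
    rw [norm_inner_symm]
    rcases eq_or_ne (T r) 0 with hTr | hTr
    · rw [hTr, inner_zero_right, norm_zero] at hν
      have : nu T ^ 2 * ‖r‖ ^ 2 = 0 := by nlinarith [sq_nonneg (nu T * ‖r‖)]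
      simp only [this, zero_div]
      positivity
    have hTr' : 0 < ‖T r‖ := norm_pos_iff.mpr hTr
    have hbound : ‖T r‖ ≤ ‖T‖ * ‖r‖ := T.le_opNorm r
    have hT : 0 < ‖T‖ := pos_of_mul_pos_left (hTr'.trans_le hbound) (norm_nonneg r)
    rw [div_le_div_iff₀ (by positivity) (by positivity)]
    calc nu T ^ 2 * ‖r‖ ^ 2 * ‖T r‖ ^ 2 ≤ nu T ^ 2 * ‖r‖ ^ 2 * (‖T‖ * ‖r‖) ^ 2 := by gcongr
      _ = (nu T * ‖r‖ ^ 2) ^ 2 * ‖T‖ ^ 2 := by ring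
      _ ≤ ‖inner ℂ r (T r)‖ ^ 2 * ‖T‖ ^ 2 := by gcongr
  rw [← Real.sqrt_sq (norm_nonneg r), ← Real.sqrt_mul' _ (sq_nonneg _)]
  refine Real.le_sqrt_of_sq_le (hα ▸ ?_)
  linarith [show (1 - nu T ^ 2 / ‖T‖ ^ 2) * ‖r‖ ^ 2 = ‖r‖ ^ 2 - nu T ^ 2 * ‖r‖ ^ 2 / ‖T‖ ^ 2 by ring]

end NumericalRange

section GMRES

variable {H : Type*} [NormedAddCommGroup H] [NormedSpace ℂ H] (T : H →L[ℂ] H)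

theorem gmresRes_succ_le_norm_sub_smul (z : H) {k : ℕ} {q : ℂ[X]} (hq : q.natDegree ≤ k)
    (hq0 : q.eval 0 = 1) (α : ℂ) :
    gmresRes T z (k + 1) ≤ ‖aeval T q z - α • T (aeval T q z)‖ := by
  refine csInf_le ⟨0, fun _ ⟨_, _, _, hx⟩ => hx ▸ norm_nonneg _⟩
    ⟨q - C α * X * q, ?_, by simp [hq0], by simp [mul_assoc]⟩
  refine (natDegree_sub_le _ _).trans (max_le (by omega) ?_)
  rw [mul_assoc]
  refine (natDegree_C_mul_le _ _).trans (natDegree_mul_le.trans ?_)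
  have := natDegree_X_le (R := ℂ)
  omega

theorem gmresRes_succ_le_mul {c : ℝ} (hc : 0 ≤ c)
    (hstep : ∀ r, ∃ α : ℂ, ‖r - α • T r‖ ≤ c * ‖r‖) (z : H) (k : ℕ) :
    gmresRes T z (k + 1) ≤ c * gmresRes T z k := by
  rw [← smul_eq_mul, gmresRes.eq_1 T z k, ← Real.sInf_smul_of_nonneg hc]
  refine le_csInf (Set.Nonempty.smul_set ⟨‖z‖, 1, by simp⟩) ?_
  rintro _ ⟨_, ⟨q, hq, hq0, rfl⟩, rfl⟩
  obtain ⟨α, hα⟩ := hstep (aeval T q z)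
  exact (gmresRes_succ_le_norm_sub_smul T z hq hq0 α).trans hα

theorem linRed_le_of_forall_exists_norm_sub_smul_le {c : ℝ} (hc : 0 ≤ c)
    (hstep : ∀ r, ∃ α : ℂ, ‖r - α • T r‖ ≤ c * ‖r‖) : linRed T ≤ c :=
  csInf_le ⟨0, fun _ hM => hM.1⟩ ⟨hc, gmresRes_succ_le_mul T hc hstep⟩

end GMRES

theorem linRed_le_sqrt_one_sub_nu_sq_div_norm_sq_general
    {H : Type*} [NormedAddCommGroup H] [InnerProductSpace ℂ H]
    (B : H ≃L[ℂ] H) :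
    linRed (B : H →L[ℂ] H) ≤
      Real.sqrt (1 - nu (B : H →L[ℂ] H) ^ 2 / ‖(B : H →L[ℂ] H)‖ ^ 2) :=
  linRed_le_of_forall_exists_norm_sub_smul_le _ (Real.sqrt_nonneg _)
    (exists_norm_sub_smul_apply_le _)

/-- Proposition 3.1, Elman's bound: `M_B ≤ sqrt(1 - ν_B² / ‖B‖²)`. -/
theorem linRed_le_sqrt_one_sub_nu_sq_div_norm_sq
    {H : Type*} [NormedAddCommGroup H] [InnerProductSpace ℂ H] [CompleteSpace H]
    [Nontrivial H] (B : H ≃L[ℂ] H) :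
    linRed (B : H →L[ℂ] H) ≤
      Real.sqrt (1 - nu (B : H →L[ℂ] H) ^ 2 / ‖(B : H →L[ℂ] H)‖ ^ 2) :=
  linRed_le_sqrt_one_sub_nu_sq_div_norm_sq_general B
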